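/- arXiv:2601.06625 — 2 statements merged into one kernel-verified Lean document; each statement's English description precedes it below -/
import Mathlib

section
/- Let n ∈ ℕ₀ and p ≥ n. Then the L² norm of the n-th primitive of the Legendre polynomial L_p satisfies ‖ψ_{p,n}‖₀² = (2^{n+1}/n!) · (1/(2p+1)) · ∏_{k=1}^{n} (2k−1)/((2p+1)² − 4k²). -/
open MeasureTheory Polynomial

noncomputable section

/-- The Legendre polynomial of degree `n`, via Rodrigues' formula. -/
def leg (n : ℕ) : Polynomial ℝ :=
  ((1 : ℝ) / (2 ^ n * n.factorial)) • derivative^[n] ((X ^ 2 - 1) ^ n)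

/-- The closed interval `Ω̄ = [-1, 1]`. -/
def Iom : Set ℝ := Set.Icc (-1 : ℝ) 1

/-- Squared `L²(Ω)` norm. -/
def nsq (f : ℝ → ℝ) : ℝ := ∫ x in Iom, f x ^ 2

/-- The `L²(Ω)` inner product. -/
def ip (f g : ℝ → ℝ) : ℝ := ∫ x in Iom, f x * g x

/-- Membership in the Sobolev space `H^k(Ω)` (strong form). -/
def MemH (k : ℕ) (w : ℝ → ℝ) : Prop := ContDiffOn ℝ k w Iom

/-- The squared Sobolev seminorm `|w|_k² = ‖w^{(k)}‖₀²`. -/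
def semSq (k : ℕ) (w : ℝ → ℝ) : ℝ := nsq (iteratedDerivWithin k w Iom)

/-- `P` coincides with a polynomial of degree `≤ p`. -/
def IsPolyDeg (p : ℕ) (P : ℝ → ℝ) : Prop :=
  ∃ q : Polynomial ℝ, q.natDegree ≤ p ∧ ∀ x, P x = q.eval x

/-- `P = π_p w` is the `L²(Ω)` projection of `w` onto polynomials of degree `≤ p`. -/
def IsL2Proj (p : ℕ) (w P : ℝ → ℝ) : Prop :=
  IsPolyDeg p P ∧
    ∀ v : Polynomial ℝ, v.natDegree ≤ p → ∫ x in Iom, (P x - w x) * v.eval x = 0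

/-- `ψ_{i,n}`: the `n`-th primitive of the Legendre polynomial `L_i`. -/
def psi (i : ℕ) : ℕ → ℝ → ℝ
  | 0 => fun x => (leg i).eval x
  | n + 1 => fun x => ∫ t in (-1 : ℝ)..x, psi i n t

/-- `f ∈ Λ_i^j = span{L_i, …, L_j}`. -/
def inLegSpan (i j : ℕ) (f : ℝ → ℝ) : Prop :=
  ∃ c : ℕ → ℝ, ∀ x, f x = ∑ m ∈ Finset.Icc i j, c m * (leg m).eval x

/-- The defining properties of `q_{p,ν}`. -/
def IsQ (p ν : ℕ) (q : ℝ → ℝ) : Prop :=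
  inLegSpan (p - ν) (p + ν + 1) q ∧ q 1 = 1 ∧ q (-1) = 0 ∧
    ∀ i, 1 ≤ i → i ≤ ν → iteratedDeriv i q 1 = 0 ∧ iteratedDeriv i q (-1) = 0

/-- Recursive construction of `q_{p,ν}`. -/
def qrec (p : ℕ) : ℕ → ℝ → ℝ
  | 0 => fun x => ((leg p).eval x + (leg (p + 1)).eval x) / 2
  | ν + 1 => fun x =>
      qrec p ν x
        + (-(iteratedDeriv (ν + 1) (qrec p ν) 1
              + (-1 : ℝ) ^ p * iteratedDeriv (ν + 1) (qrec p ν) (-1)) / 2) * psi p (ν + 1) x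
        + (-(iteratedDeriv (ν + 1) (qrec p ν) 1
              - (-1 : ℝ) ^ p * iteratedDeriv (ν + 1) (qrec p ν) (-1)) / 2) * psi (p + 1) (ν + 1) x

/-- The coefficient `α_{p,ν}` of the recursive construction. -/
def alphaC (p ν : ℕ) : ℝ :=
  -(iteratedDeriv ν (qrec p (ν - 1)) 1 + (-1 : ℝ) ^ p * iteratedDeriv ν (qrec p (ν - 1)) (-1)) / 2

/-- The coefficient `β_{p,ν}` of the recursive construction. -/
def betaC (p ν : ℕ) : ℝ :=
  -(iteratedDeriv ν (qrec p (ν - 1)) 1 - (-1 : ℝ) ^ p * iteratedDeriv ν (qrec p (ν - 1)) (-1)) / 2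

end


/-!
Up to the factor `(2^p p!)⁻¹`, `ψ_{p,n}` is the `(p-n)`-th derivative `G_{p-n}` of `(x² - 1)^p`:
this is Rodrigues' formula for `n = 0`, and the derivatives `G_k` with `k < p` vanish at `±1`, so
the primitive of `G_{k+1}` starting at `-1` is `G_k`.

Differentiating `(x² - 1) G₁ = 2p x G₀` repeatedly gives `(x² - 1) G_{k+2} = A x G_{k+1} + B G_k`.
For a solution of such an equation vanishing at `±1`, a suitable quadratic form in `G_k` and
`G_{k+1}` with polynomial coefficients vanishes at `±1` and has derivative `c G_k² + d G_{k+1}²`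
with constant `c, d`. Integrating it relates `‖ψ_{p,n+1}‖₀²` to `‖ψ_{p,n}‖₀²` by exactly the factor
of the product. The base case `‖L_p‖₀² = 2/(2p+1)` comes from `p` integrations by parts,
`∫ G_p² = (2p)! ∫ (1 - x²)^p`, and `∫ (1 - x²)^p = 2^{2p+1} p!² / (2p+1)!`.
-/

namespace Polynomial

theorem intervalIntegrable_eval (P : ℝ[X]) (a b : ℝ) :
    IntervalIntegrable (fun x => P.eval x) volume a b :=
  P.continuous.intervalIntegrable a b

theorem integral_eval_derivative (P : ℝ[X]) (a b : ℝ) :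
    ∫ x in a..b, (derivative P).eval x = P.eval b - P.eval a :=
  intervalIntegral.integral_eq_sub_of_hasDerivAt (fun x _ => P.hasDerivAt x)
    ((derivative P).intervalIntegrable_eval a b)

theorem integral_eval_derivative_mul {U V : ℝ[X]} {a b : ℝ}
    (ha : U.eval a * V.eval a = 0) (hb : U.eval b * V.eval b = 0) :
    ∫ x in a..b, (derivative U).eval x * V.eval x =
      -∫ x in a..b, U.eval x * (derivative V).eval x := by
  rw [intervalIntegral.integral_mul_deriv_eq_deriv_mul (fun x _ => U.hasDerivAt x)
    (fun x _ => V.hasDerivAt x) ((derivative U).intervalIntegrable_eval a b)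
    ((derivative V).intervalIntegrable_eval a b), ha, hb]
  ring

theorem integral_eval_iterate_derivative_mul {U : ℝ[X]} {a b : ℝ} {j : ℕ}
    (hU : ∀ i < j, (derivative^[i] U).eval a = 0 ∧ (derivative^[i] U).eval b = 0) (V : ℝ[X]) :
    ∫ x in a..b, (derivative^[j] U).eval x * V.eval x =
      (-1) ^ j * ∫ x in a..b, U.eval x * (derivative^[j] V).eval x := by
  induction j generalizing V with
  | zero => simp
  | succ j ih =>
    obtain ⟨ha, hb⟩ := hU j j.lt_succ_self
    rw [Function.iterate_succ_apply', integral_eval_derivative_mul (by simp [ha]) (by simp [hb]),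
      ih (fun i hi => hU i (hi.trans j.lt_succ_self)), Function.iterate_succ_apply]
    ring

theorem integral_sq_relation_of_ode {G : ℝ[X]} {A B : ℝ}
    (hG : (X ^ 2 - 1) * derivative (derivative G) = C A * X * derivative G + C B * G)
    (h1 : G.eval 1 = 0) (hm1 : G.eval (-1) = 0) :
    (2 + A) * (3 + 2 * A - 4 * B) * (∫ x in (-1)..1, G.eval x ^ 2)
      + 4 * (1 + A) * ∫ x in (-1)..1, (derivative G).eval x ^ 2 = 0 := by
  -- The coefficients of `Q` are tuned so that, once `G''` is eliminated with `hG`, the terms in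
  -- `x G G'` and `x² G'²` of its derivative cancel.
  set Q : ℝ[X] := -2 * (3 + 2 * C A) * (X ^ 2 - 1) * G * derivative G
    + ((3 + 2 * C A) * (2 + C A) - 2 * C B) * X * G ^ 2
    + 2 * X * (X ^ 2 - 1) * derivative G ^ 2
  have hQ : derivative Q = (2 + C A) * (3 + 2 * C A - 4 * C B) * G ^ 2
      + 4 * (1 + C A) * derivative G ^ 2 := by
    simp only [Q, derivative_mul, derivative_add, derivative_sub, derivative_pow, derivative_C,
      derivative_X, derivative_one, derivative_ofNat, derivative_neg, Nat.cast_ofNat, C_ofNat]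
    linear_combination (2 * X * derivative G * 2 - 2 * (3 + 2 * C A) * G) * hG
  have hQ_one : Q.eval 1 = 0 := by simp [Q, h1]
  have hQ_neg_one : Q.eval (-1) = 0 := by simp [Q, hm1]
  have hintegrable (P : ℝ[X]) (c : ℝ) :
      IntervalIntegrable (fun x => c * P.eval x ^ 2) volume (-1) 1 :=
    (P.continuous.pow 2).const_mul c |>.intervalIntegrable _ _
  calc _ = ∫ x in (-1)..1, (derivative Q).eval x := by
        simp only [hQ, eval_add, eval_mul, eval_pow, eval_C, eval_sub, eval_ofNat, eval_one]
        rw [intervalIntegral.integral_add (hintegrable _ _) (hintegrable _ _),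
          intervalIntegral.integral_const_mul, intervalIntegral.integral_const_mul]
    _ = 0 := by rw [integral_eval_derivative, hQ_one, hQ_neg_one, sub_zero]

end Polynomial

noncomputable def rodrigues (p m : ℕ) : ℝ[X] := derivative^[m] ((X ^ 2 - 1) ^ p)

theorem rodrigues_succ (p m : ℕ) : rodrigues p (m + 1) = derivative (rodrigues p m) :=
  Function.iterate_succ_apply' _ _ _

theorem eval_rodrigues_eq_zero {p m : ℕ} (hm : m < p) {t : ℝ} (ht : t ^ 2 = 1) :
    (rodrigues p m).eval t = 0 := by
  obtain ⟨S, hS⟩ := pow_sub_dvd_iterate_derivative_pow (X ^ 2 - 1 : ℝ[X]) p m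
  simp [rodrigues, hS, ht, Nat.sub_ne_zero_of_lt hm]

theorem rodrigues_two_mul_self (p : ℕ) : rodrigues p (2 * p) = C ((2 * p).factorial : ℝ) := by
  have hmonic : ((X : ℝ[X]) ^ 2 - 1).Monic := by
    simpa using monic_X_pow_sub_C (1 : ℝ) two_ne_zero
  have hdeg : ((X ^ 2 - 1 : ℝ[X]) ^ p).natDegree = 2 * p := by
    rw [natDegree_pow, ← C_1, natDegree_X_pow_sub_C, mul_comm]
  have hconst : (rodrigues p (2 * p)).natDegree ≤ 0 := by
    have := natDegree_iterate_derivative ((X ^ 2 - 1 : ℝ[X]) ^ p) (2 * p)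
    rwa [hdeg, Nat.sub_self] at this
  rw [eq_C_of_natDegree_le_zero hconst, rodrigues, coeff_iterate_derivative, zero_add,
    Nat.descFactorial_self, ← hdeg, (hmonic.pow p).coeff_natDegree, nsmul_one]

theorem sq_sub_one_mul_rodrigues_one (p : ℕ) :
    (X ^ 2 - 1) * rodrigues p 1 = C (2 * (p : ℝ)) * X * rodrigues p 0 := by
  cases p with
  | zero => simp [rodrigues]
  | succ p =>
    simp only [rodrigues, Function.iterate_one, Function.iterate_zero_apply, derivative_pow,
      derivative_sub, derivative_X, derivative_one, map_mul, map_natCast, map_ofNat]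
    push_cast
    ring

theorem sq_sub_one_mul_rodrigues_add_two (p m : ℕ) :
    (X ^ 2 - 1) * rodrigues p (m + 2) =
      C (2 * ((p : ℝ) - m - 1)) * X * rodrigues p (m + 1)
        + C ((m + 1) * (2 * (p : ℝ) - m)) * rodrigues p m := by
  induction m with
  | zero =>
    have h := congrArg derivative (sq_sub_one_mul_rodrigues_one p)
    simp only [derivative_mul, derivative_sub, derivative_X_pow, derivative_one, derivative_X,
      derivative_C, ← rodrigues_succ] at h
    simp only [map_mul, map_sub, map_natCast, map_ofNat, map_one, map_zero, Nat.cast_zero,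
      zero_add] at h ⊢
    linear_combination h
  | succ m ih =>
    have h := congrArg derivative ih
    simp only [derivative_mul, derivative_add, derivative_sub, derivative_X_pow, derivative_one,
      derivative_X, derivative_C, ← rodrigues_succ] at h
    simp only [map_mul, map_sub, map_add, map_natCast, map_ofNat, map_one, Nat.cast_add,
      Nat.cast_one] at h ⊢
    linear_combination h

theorem integral_one_sub_sq_pow_succ (q : ℕ) :
    (2 * (q : ℝ) + 3) * ∫ x in (-1)..1, (1 - x ^ 2) ^ (q + 1) =
      (2 * q + 2) * ∫ x in (-1)..1, (1 - x ^ 2) ^ q := by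
  have hderiv : derivative (X * (1 - X ^ 2) ^ (q + 1) : ℝ[X]) =
      (2 * (q : ℝ[X]) + 3) * (1 - X ^ 2) ^ (q + 1) - (2 * (q : ℝ[X]) + 2) * (1 - X ^ 2) ^ q := by
    simp only [derivative_mul, derivative_pow, derivative_sub, derivative_X, derivative_one,
      map_natCast, Nat.cast_ofNat, C_ofNat, add_tsub_cancel_right]
    rw [pow_succ]
    push_cast
    ring
  have hintegrable (r : ℕ) : IntervalIntegrable (fun x : ℝ => (1 - x ^ 2) ^ r) volume (-1) 1 :=
    (by fun_prop : Continuous fun x : ℝ => (1 - x ^ 2) ^ r).intervalIntegrable _ _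
  have h := integral_eval_derivative (X * (1 - X ^ 2) ^ (q + 1) : ℝ[X]) (-1) 1
  simp only [hderiv, eval_sub, eval_mul, eval_pow, eval_X, eval_one, eval_add, eval_natCast,
    eval_ofNat] at h
  rw [intervalIntegral.integral_sub ((hintegrable _).const_mul _) ((hintegrable _).const_mul _),
    intervalIntegral.integral_const_mul, intervalIntegral.integral_const_mul] at h
  norm_num at h
  linarith

theorem integral_one_sub_sq_pow (p : ℕ) :
    ∫ x in (-1)..1, (1 - x ^ 2) ^ p =
      2 ^ (2 * p + 1) * (p.factorial : ℝ) ^ 2 / (2 * p + 1).factorial := by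
  induction p with
  | zero => norm_num
  | succ q ih =>
    have h := integral_one_sub_sq_pow_succ q
    have h2q : ((2 * (q + 1) + 1).factorial : ℝ) =
        (2 * q + 3) * (2 * q + 2) * (2 * q + 1).factorial := by
      push_cast [show 2 * (q + 1) + 1 = 2 * q + 1 + 1 + 1 by ring, Nat.factorial_succ]
      ring
    have hq : ((q + 1).factorial : ℝ) = (q + 1) * q.factorial := by
      push_cast [Nat.factorial_succ]
      ring
    rw [ih] at h
    rw [h2q, hq, eq_div_iff (by positivity)]
    field_simp at h
    linear_combination (2 * (q : ℝ) + 2) * h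

theorem integral_rodrigues_sq_succ {p k : ℕ} (hk : k < p) :
    ((p : ℝ) - k) * ((2 * p + 1) ^ 2 - 4 * ((p : ℝ) - k) ^ 2) *
        ∫ x in (-1)..1, (rodrigues p k).eval x ^ 2 =
      2 * (2 * ((p : ℝ) - k) - 1) * ∫ x in (-1)..1, (rodrigues p (k + 1)).eval x ^ 2 := by
  have hode := sq_sub_one_mul_rodrigues_add_two p k
  rw [rodrigues_succ, rodrigues_succ] at hode
  have h := integral_sq_relation_of_ode hode (eval_rodrigues_eq_zero hk (by norm_num))
    (eval_rodrigues_eq_zero hk (by norm_num))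
  rw [← rodrigues_succ] at h
  linear_combination -h / 2

theorem integral_rodrigues_sq_self (p : ℕ) :
    ∫ x in (-1)..1, (rodrigues p p).eval x ^ 2 =
      (2 ^ p * p.factorial) ^ 2 * (2 / (2 * p + 1)) := by
  have hpair : ∫ x in (-1)..1, (rodrigues p p).eval x * (rodrigues p p).eval x =
      (-1) ^ p * ∫ x in (-1)..1,
        ((X ^ 2 - 1) ^ p : ℝ[X]).eval x * (derivative^[p] (rodrigues p p)).eval x :=
    integral_eval_iterate_derivative_mul
      (fun i hi => ⟨eval_rodrigues_eq_zero hi (by norm_num),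
        eval_rodrigues_eq_zero hi (by norm_num)⟩) _
  have hiter : derivative^[p] (rodrigues p p) = C ((2 * p).factorial : ℝ) := by
    rw [rodrigues, ← Function.iterate_add_apply, ← two_mul]
    exact rodrigues_two_mul_self p
  have hsign (x : ℝ) : (x ^ 2 - 1) ^ p = (-1) ^ p * (1 - x ^ 2) ^ p := by
    rw [← mul_pow]; ring
  calc ∫ x in (-1)..1, (rodrigues p p).eval x ^ 2
      = (-1) ^ p * ∫ x in (-1)..1,
          ((X ^ 2 - 1) ^ p : ℝ[X]).eval x * (C ((2 * p).factorial : ℝ)).eval x := by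
        rw [← hiter, ← hpair]
        simp only [sq]
    _ = ((2 * p).factorial : ℝ) * ∫ x in (-1)..1, (1 - x ^ 2) ^ p := by
        simp only [eval_pow, eval_sub, eval_X, eval_one, eval_C, hsign,
          ← intervalIntegral.integral_const_mul]
        congr 1 with x
        rw [← mul_assoc, ← mul_assoc, ← mul_pow]
        norm_num
        ring
    _ = (2 ^ p * p.factorial) ^ 2 * (2 / (2 * p + 1)) := by
        rw [integral_one_sub_sq_pow, Nat.factorial_succ]
        push_cast
        field_simp
        ring

theorem nsq_eq_integral (f : ℝ → ℝ) : nsq f = ∫ x in (-1)..1, f x ^ 2 := by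
  rw [nsq, Iom, integral_Icc_eq_integral_Ioc, intervalIntegral.integral_of_le (by norm_num)]

theorem psi_eq_rodrigues {p n : ℕ} (hn : n ≤ p) (x : ℝ) :
    psi p n x = (2 ^ p * p.factorial : ℝ)⁻¹ * (rodrigues p (p - n)).eval x := by
  induction n generalizing x with
  | zero => simp [psi, leg, rodrigues]
  | succ n ih =>
    have hsucc : p - n = p - (n + 1) + 1 := by omega
    simp only [psi, ih (by omega), intervalIntegral.integral_const_mul, hsucc, rodrigues_succ,
      integral_eval_derivative, eval_rodrigues_eq_zero (show p - (n + 1) < p by omega)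
        (show (-1 : ℝ) ^ 2 = 1 by norm_num), sub_zero]

theorem nsq_psi {p n : ℕ} (hn : n ≤ p) :
    nsq (psi p n) =
      (2 ^ p * p.factorial : ℝ)⁻¹ ^ 2 * ∫ x in (-1)..1, (rodrigues p (p - n)).eval x ^ 2 := by
  simp only [nsq_eq_integral, psi_eq_rodrigues hn, mul_pow, intervalIntegral.integral_const_mul]

theorem nsq_psi_zero (p : ℕ) : nsq (psi p 0) = 2 / (2 * p + 1) := by
  rw [nsq_psi p.zero_le, Nat.sub_zero, integral_rodrigues_sq_self, ← mul_assoc, ← mul_pow,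
    inv_mul_cancel₀ (by positivity), one_pow, one_mul]

theorem nsq_psi_succ {p n : ℕ} (hn : n < p) :
    (n + 1) * ((2 * p + 1) ^ 2 - 4 * ((n : ℝ) + 1) ^ 2) * nsq (psi p (n + 1)) =
      2 * (2 * n + 1) * nsq (psi p n) := by
  have h := integral_rodrigues_sq_succ (show p - (n + 1) < p by omega)
  rw [show p - (n + 1) + 1 = p - n by omega, Nat.cast_sub hn, sub_sub_cancel] at h
  rw [nsq_psi hn, nsq_psi hn.le]
  push_cast at h
  linear_combination (2 ^ p * p.factorial : ℝ)⁻¹ ^ 2 * h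

/-- `L²`-norm of the `n`-th primitive of the Legendre polynomial `L_p`:
`‖ψ_{p,n}‖₀² = (2^{n+1}/n!) · 1/(2p+1) · ∏_{k=1}^n (2k−1)/((2p+1)² − 4k²)`. -/
theorem l2_norm_sq_legendre_primitive (p n : ℕ) (hnp : n ≤ p) :
    nsq (psi p n) =
      2 ^ (n + 1) / (n.factorial : ℝ) * (1 / (2 * (p : ℝ) + 1)) *
        ∏ k ∈ Finset.Icc 1 n,
          (2 * (k : ℝ) - 1) / ((2 * (p : ℝ) + 1) ^ 2 - 4 * (k : ℝ) ^ 2) := by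
  induction n with
  | zero => simp [nsq_psi_zero, div_eq_mul_inv]
  | succ n ih =>
    have hrec := nsq_psi_succ hnp
    have hD : (2 * (p : ℝ) + 1) ^ 2 - 4 * ((n : ℝ) + 1) ^ 2 ≠ 0 := by
      have hle : (n : ℝ) + 1 ≤ p := by exact_mod_cast hnp
      nlinarith
    rw [ih (by omega)] at hrec
    rw [← mul_right_inj' (mul_ne_zero n.cast_add_one_ne_zero hD), hrec,
      Finset.prod_Icc_succ_top (by omega), Nat.factorial_succ]
    generalize ∏ k ∈ Finset.Icc 1 n,
      (2 * (k : ℝ) - 1) / ((2 * (p : ℝ) + 1) ^ 2 - 4 * (k : ℝ) ^ 2) = P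
    push_cast
    generalize (2 * (p : ℝ) + 1) ^ 2 - 4 * ((n : ℝ) + 1) ^ 2 = D at hD ⊢
    field_simp
    ring
end

section
/- Let p, ν ∈ ℕ₀ with ν ≤ p, and let u ∈ H^{ν+1}(Ω). Suppose q_{p,ν} ∈ Λ_{p−ν}^{p+ν+1} satisfies q_{p,ν}(1) = 1, q_{p,ν}(−1) = 0 and q_{p,ν}^{(i)}(±1) = 0 for i = 1,…,ν. Then both traces of the ν-th derivative of the L² projection error satisfy |(u − π_p u)^{(ν)}(±1)| ≤ ‖q_{p,ν}‖₀ · |u|_{ν+1}. -/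
open MeasureTheory Polynomial

/-!
Write `e = u - π_p u`. Let `R` be a polynomial of degree `≤ p + ν + 1` whose derivatives of orders
`1, …, ν` vanish at `±1` and which is orthogonal to the polynomials of degree `< p - ν`. Then `R` does
not see the `π_p u` part of `u^{(ν+1)}`, and integrating `∫ R e^{(ν+1)}` by parts `ν + 1` times leaves
only the first boundary term `R(1) e^{(ν)}(1) - R(-1) e^{(ν)}(-1)`: the last integral `∫ R^{(ν+1)} e`
vanishes because `R^{(ν+1)}` has degree `≤ p`. The polynomial `q_{p,ν}` and its reflection
`q_{p,ν}(-x)` are such `R`, isolating the trace at `1` resp. `-1`; Cauchy–Schwarz finishes.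
-/

namespace Polynomial

lemma contDiff_eval (Q : ℝ[X]) (n : WithTop ℕ∞) : ContDiff ℝ n fun x => Q.eval x := by
  simpa only [coe_aeval_eq_eval] using Q.contDiff_aeval (𝕜 := ℝ) n

lemma iteratedDeriv_eval (Q : ℝ[X]) (n : ℕ) :
    iteratedDeriv n (fun x => Q.eval x) = fun x => (derivative^[n] Q).eval x := by
  induction n generalizing Q with
  | zero => simp
  | succ n ih =>
    have hderiv : _root_.deriv (fun x => Q.eval x) = fun x => Q.derivative.eval x := by
      ext x; exact Q.deriv
    rw [iteratedDeriv_succ', hderiv, ih, Function.iterate_succ_apply]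

lemma iteratedDerivWithin_eval {s : Set ℝ} (hs : UniqueDiffOn ℝ s) {x : ℝ} (hx : x ∈ s)
    (Q : ℝ[X]) (n : ℕ) :
    iteratedDerivWithin n (fun x => Q.eval x) s x = (derivative^[n] Q).eval x := by
  rw [iteratedDerivWithin_eq_iteratedDeriv hs (Q.contDiff_eval n).contDiffAt hx,
    Q.iteratedDeriv_eval]

lemma degree_iterate_derivative_succ_lt {P : ℝ[X]} {p : ℕ} (hP : P.natDegree ≤ p) (k : ℕ) :
    (derivative^[k + 1] P).degree < ↑(p - k) := by
  by_cases hlt : P.natDegree < k + 1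
  · simp [iterate_derivative_eq_zero hlt]
  · exact degree_le_natDegree.trans_lt <| by
      exact_mod_cast (natDegree_iterate_derivative P (k + 1)).trans_lt (by omega)

lemma iterate_derivative_comp_neg_X (Q : ℝ[X]) (k : ℕ) :
    derivative^[k] (Q.comp (-X)) = (-1) ^ k * (derivative^[k] Q).comp (-X) := by
  induction k with
  | zero => simp
  | succ k ih =>
    rw [Function.iterate_succ_apply', ih, Function.iterate_succ_apply', derivative_mul,
      derivative_comp]
    simp only [derivative_neg, derivative_X, derivative_pow, derivative_one]
    ring

lemma eval_iterate_derivative_X_sq_sub_one_pow {m k : ℕ} (hk : k < m) {a : ℝ} (ha : a ^ 2 = 1) :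
    (derivative^[k] ((X ^ 2 - 1 : ℝ[X]) ^ m)).eval a = 0 := by
  obtain ⟨r, hr⟩ := (dvd_pow_self _ (Nat.sub_ne_zero_of_lt hk)).trans
    (pow_sub_dvd_iterate_derivative_pow (X ^ 2 - 1 : ℝ[X]) m k)
  simp [hr, ha]

end Polynomial

lemma leg_natDegree_le (m : ℕ) : (leg m).natDegree ≤ m := by
  have hW : ((X ^ 2 - 1 : ℝ[X]) ^ m).natDegree ≤ 2 * m := by
    refine natDegree_pow_le.trans ?_
    rw [← C_1, natDegree_X_pow_sub_C, mul_comm]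
  exact (natDegree_smul_le _ _).trans <|
    (natDegree_iterate_derivative _ m).trans (by omega)

lemma uniqueDiffOn_Iom : UniqueDiffOn ℝ Iom := uniqueDiffOn_Icc (by norm_num)

lemma uIcc_neg_one_one : Set.uIcc (-1 : ℝ) 1 = Iom := Set.uIcc_of_le (by norm_num)

lemma setIntegral_Iom (f : ℝ → ℝ) : ∫ x in Iom, f x = ∫ x in (-1 : ℝ)..1, f x := by
  rw [Iom, integral_Icc_eq_integral_Ioc, ← intervalIntegral.integral_of_le (by norm_num)]

lemma nsq_comp_neg (f : ℝ → ℝ) : nsq (fun x => f (-x)) = nsq f := by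
  simp only [nsq, setIntegral_Iom, intervalIntegral.integral_comp_neg (fun x => f x ^ 2), neg_neg]

lemma intervalIntegrable_eval_mul {g : ℝ[X]} {f : ℝ → ℝ} (hf : ContinuousOn f Iom) :
    IntervalIntegrable (fun x => g.eval x * f x) volume (-1) 1 :=
  (g.continuous.continuousOn.mul (uIcc_neg_one_one ▸ hf)).intervalIntegrable

lemma integral_eval_mul_derivWithin (g : ℝ[X]) {f : ℝ → ℝ} (hf : ContDiffOn ℝ 1 f Iom) :
    ∫ x in (-1 : ℝ)..1, g.eval x * derivWithin f Iom x =
      g.eval 1 * f 1 - g.eval (-1) * f (-1) -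
        ∫ x in (-1 : ℝ)..1, g.derivative.eval x * f x := by
  have hderiv : ∀ x ∈ Set.uIcc (-1 : ℝ) 1,
      HasDerivWithinAt f (derivWithin f Iom x) (Set.uIcc (-1) 1) x := by
    rw [uIcc_neg_one_one]
    exact fun x hx => (hf.differentiableOn one_ne_zero x hx).hasDerivWithinAt
  have hcont : ContinuousOn (derivWithin f Iom) (Set.uIcc (-1) 1) :=
    uIcc_neg_one_one ▸ hf.continuousOn_derivWithin uniqueDiffOn_Iom le_rfl
  exact intervalIntegral.integral_mul_deriv_eq_deriv_mul_of_hasDerivWithinAt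
    (fun x _ => g.hasDerivWithinAt x _) hderiv
    (g.derivative.continuous.intervalIntegrable _ _) hcont.intervalIntegrable

lemma integral_eval_mul_iteratedDerivWithin (g : ℝ[X]) {f : ℝ → ℝ} {k : ℕ}
    (hf : ContDiffOn ℝ k f Iom)
    (hg : ∀ i < k, (derivative^[i] g).eval 1 = 0 ∧ (derivative^[i] g).eval (-1) = 0) :
    ∫ x in (-1 : ℝ)..1, g.eval x * iteratedDerivWithin k f Iom x =
      (-1) ^ k * ∫ x in (-1 : ℝ)..1, (derivative^[k] g).eval x * f x := by
  induction k generalizing f with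
  | zero => simp
  | succ k ih =>
    have hf' : ContDiffOn ℝ k (derivWithin f Iom) Iom :=
      hf.derivWithin uniqueDiffOn_Iom (by norm_cast)
    obtain ⟨hg1, hg2⟩ := hg k k.lt_succ_self
    rw [iteratedDerivWithin_succ', ih hf' fun i hi => hg i (by omega),
      integral_eval_mul_derivWithin _ (hf.of_le (by norm_cast; omega)), hg1, hg2,
      ← Function.iterate_succ_apply' derivative]
    ring

lemma integral_leg_mul_eq_zero {m : ℕ} {w : ℝ[X]} (hw : w.degree < m) :
    ∫ x in (-1 : ℝ)..1, (leg m).eval x * w.eval x = 0 := by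
  set W : ℝ[X] := (X ^ 2 - 1) ^ m
  have hparts := integral_eval_mul_iteratedDerivWithin W (w.contDiff_eval m).contDiffOn
    fun i hi => ⟨eval_iterate_derivative_X_sq_sub_one_pow hi (by norm_num),
      eval_iterate_derivative_X_sq_sub_one_pow hi (by norm_num)⟩
  have hvanish :
      ∫ x in (-1 : ℝ)..1, W.eval x * iteratedDerivWithin m (fun x => w.eval x) Iom x = 0 := by
    rw [← intervalIntegral.integral_zero]
    refine intervalIntegral.integral_congr fun x hx => ?_
    rw [uIcc_neg_one_one] at hx
    simp [iteratedDerivWithin_eval uniqueDiffOn_Iom hx, iterate_derivative_eq_zero_of_degree_lt hw]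
  have hWm : ∫ x in (-1 : ℝ)..1, (derivative^[m] W).eval x * w.eval x = 0 := by
    simpa [hvanish] using hparts
  simp only [leg, eval_smul, smul_eq_mul, mul_assoc, intervalIntegral.integral_const_mul]
  exact mul_eq_zero_of_right _ hWm

lemma abs_integral_mul_le_sqrt_mul_sqrt {α : Type*} [MeasurableSpace α] {μ : Measure α}
    {f g : α → ℝ} (hf : Integrable (fun x => f x ^ 2) μ)
    (hg : Integrable (fun x => g x ^ 2) μ)
    (hfg : Integrable (fun x => f x * g x) μ) :
    |∫ x, f x * g x ∂μ| ≤ √(∫ x, f x ^ 2 ∂μ) * √(∫ x, g x ^ 2 ∂μ) := by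
  have hquad : ∀ t : ℝ,
      0 ≤ (∫ x, g x ^ 2 ∂μ) * (t * t) + (2 * ∫ x, f x * g x ∂μ) * t + ∫ x, f x ^ 2 ∂μ := by
    intro t
    have hexpand : ∫ x, (t * g x + f x) ^ 2 ∂μ = (∫ x, g x ^ 2 ∂μ) * (t * t)
        + (2 * ∫ x, f x * g x ∂μ) * t + ∫ x, f x ^ 2 ∂μ := by
      have hpointwise : (fun x => (t * g x + f x) ^ 2) =
          fun x => t ^ 2 * g x ^ 2 + 2 * t * (f x * g x) + f x ^ 2 := by
        ext x; ring
      rw [hpointwise, integral_add ((hg.const_mul _).fun_add (hfg.const_mul (2 * t))) hf,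
        integral_add (hg.const_mul _) (hfg.const_mul (2 * t)), integral_const_mul,
        integral_const_mul]
      ring
    exact hexpand ▸ integral_nonneg fun x => sq_nonneg _
  have hdisc := discrim_le_zero hquad
  rw [discrim] at hdisc
  rw [← Real.sqrt_mul (integral_nonneg fun x => sq_nonneg (f x))]
  exact Real.abs_le_sqrt (by nlinarith)

structure IsTraceRepresenter (p ν : ℕ) (R : ℝ[X]) : Prop where
  natDegree_le : R.natDegree ≤ p + ν + 1
  eval_iterate_derivative_one : ∀ i, 1 ≤ i → i ≤ ν → (derivative^[i] R).eval 1 = 0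
  eval_iterate_derivative_neg_one : ∀ i, 1 ≤ i → i ≤ ν → (derivative^[i] R).eval (-1) = 0
  integral_mul_eq_zero :
    ∀ w : ℝ[X], w.degree < ↑(p - ν) → ∫ x in (-1 : ℝ)..1, R.eval x * w.eval x = 0

namespace IsTraceRepresenter

variable {p ν : ℕ} {R : ℝ[X]}

theorem comp_neg_X (hR : IsTraceRepresenter p ν R) : IsTraceRepresenter p ν (R.comp (-X)) where
  natDegree_le := by simpa [natDegree_comp] using hR.natDegree_le
  eval_iterate_derivative_one i h1 h2 := by
    simp [iterate_derivative_comp_neg_X, eval_comp, hR.eval_iterate_derivative_neg_one i h1 h2]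
  eval_iterate_derivative_neg_one i h1 h2 := by
    simp [iterate_derivative_comp_neg_X, eval_comp, hR.eval_iterate_derivative_one i h1 h2]
  integral_mul_eq_zero w hw := by
    have hreflected := hR.integral_mul_eq_zero (w.comp (-X)) (by rwa [degree_comp_neg_X])
    calc ∫ x in (-1 : ℝ)..1, (R.comp (-X)).eval x * w.eval x
        = ∫ x in (-1 : ℝ)..1, (fun y => R.eval y * (w.comp (-X)).eval y) (-x) := by
          simp [eval_comp]
      _ = 0 := by
          rwa [intervalIntegral.integral_comp_neg fun y => R.eval y * (w.comp (-X)).eval y,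
            neg_neg]

theorem integral_mul_iteratedDerivWithin_succ_eq (hR : IsTraceRepresenter p ν R) {e : ℝ → ℝ}
    (he : ContDiffOn ℝ (ν + 1 : ℕ) e Iom) :
    ∫ x in (-1 : ℝ)..1, R.eval x * iteratedDerivWithin (ν + 1) e Iom x =
      R.eval 1 * iteratedDerivWithin ν e Iom 1 - R.eval (-1) * iteratedDerivWithin ν e Iom (-1) -
        (-1) ^ ν * ∫ x in (-1 : ℝ)..1, (derivative^[ν + 1] R).eval x * e x := by
  have he_top : ContDiffOn ℝ 1 (iteratedDerivWithin ν e Iom) Iom :=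
    ((contDiffOn_nat_succ_iff_contDiffOn_one_iteratedDerivWithin uniqueDiffOn_Iom).1 he).2
  have hR' : ∀ i < ν, (derivative^[i] R.derivative).eval 1 = 0 ∧
      (derivative^[i] R.derivative).eval (-1) = 0 := fun i hi => by
    rw [← Function.iterate_succ_apply]
    exact ⟨hR.eval_iterate_derivative_one _ (by omega) (by omega),
      hR.eval_iterate_derivative_neg_one _ (by omega) (by omega)⟩
  rw [iteratedDerivWithin_succ, integral_eval_mul_derivWithin R he_top,
    integral_eval_mul_iteratedDerivWithin R.derivative (he.of_le (by norm_cast; omega)) hR',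
    Function.iterate_succ_apply]

theorem integral_mul_iteratedDerivWithin_succ_sub_eval (hR : IsTraceRepresenter p ν R)
    {u : ℝ → ℝ} (hu : MemH (ν + 1) u) {Q : ℝ[X]} (hQ : Q.natDegree ≤ p) :
    ∫ x in (-1 : ℝ)..1, R.eval x * iteratedDerivWithin (ν + 1) (fun y => u y - Q.eval y) Iom x =
      ∫ x in (-1 : ℝ)..1, R.eval x * iteratedDerivWithin (ν + 1) u Iom x := by
  have hsub : ∀ x ∈ Set.uIcc (-1 : ℝ) 1,
      R.eval x * iteratedDerivWithin (ν + 1) (fun y => u y - Q.eval y) Iom x =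
        R.eval x * iteratedDerivWithin (ν + 1) u Iom x -
          R.eval x * (derivative^[ν + 1] Q).eval x := by
    intro x hx
    rw [uIcc_neg_one_one] at hx
    rw [← iteratedDerivWithin_eval uniqueDiffOn_Iom hx, ← mul_sub]
    exact congrArg _ (iteratedDerivWithin_sub hx uniqueDiffOn_Iom (hu x hx)
      ((Q.contDiff_eval _).contDiffOn x hx))
  rw [intervalIntegral.integral_congr hsub, intervalIntegral.integral_sub
    (intervalIntegrable_eval_mul (hu.continuousOn_iteratedDerivWithin le_rfl uniqueDiffOn_Iom))
    (intervalIntegrable_eval_mul (Polynomial.continuous _).continuousOn),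
    hR.integral_mul_eq_zero _ (degree_iterate_derivative_succ_lt hQ ν), sub_zero]

theorem integral_mul_iteratedDerivWithin_succ (hR : IsTraceRepresenter p ν R) {u P : ℝ → ℝ}
    (hu : MemH (ν + 1) u) (hP : IsL2Proj p u P) :
    ∫ x in (-1 : ℝ)..1, R.eval x * iteratedDerivWithin (ν + 1) u Iom x =
      R.eval 1 * iteratedDerivWithin ν (fun y => u y - P y) Iom 1 -
        R.eval (-1) * iteratedDerivWithin ν (fun y => u y - P y) Iom (-1) := by
  obtain ⟨⟨Q, hQ, hPQ⟩, horth⟩ := hP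
  obtain rfl : P = fun x => Q.eval x := funext hPQ
  have hprojection :
      ∫ x in (-1 : ℝ)..1, (derivative^[ν + 1] R).eval x * (u x - Q.eval x) = 0 := by
    have h := horth (derivative^[ν + 1] R) <| by
      have := natDegree_iterate_derivative R (ν + 1)
      have := hR.natDegree_le
      omega
    rw [setIntegral_Iom] at h
    rw [← neg_eq_zero, ← intervalIntegral.integral_neg, ← h]
    exact intervalIntegral.integral_congr fun x _ => by ring
  rw [← hR.integral_mul_iteratedDerivWithin_succ_sub_eval hu hQ,
    hR.integral_mul_iteratedDerivWithin_succ_eq (hu.sub (Q.contDiff_eval _).contDiffOn),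
    hprojection, mul_zero, sub_zero]

theorem abs_eval_mul_sub_eval_mul_le (hR : IsTraceRepresenter p ν R) {u P : ℝ → ℝ}
    (hu : MemH (ν + 1) u) (hP : IsL2Proj p u P) :
    |R.eval 1 * iteratedDerivWithin ν (fun y => u y - P y) Iom 1 -
        R.eval (-1) * iteratedDerivWithin ν (fun y => u y - P y) Iom (-1)| ≤
      √(nsq fun x => R.eval x) * √(semSq (ν + 1) u) := by
  rw [← hR.integral_mul_iteratedDerivWithin_succ hu hP, ← setIntegral_Iom]
  have hR_cont : ContinuousOn (fun x => R.eval x) Iom := R.continuous.continuousOn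
  have hu_cont : ContinuousOn (iteratedDerivWithin (ν + 1) u Iom) Iom :=
    hu.continuousOn_iteratedDerivWithin le_rfl uniqueDiffOn_Iom
  exact abs_integral_mul_le_sqrt_mul_sqrt ((hR_cont.pow 2).integrableOn_compact isCompact_Icc)
    ((hu_cont.pow 2).integrableOn_compact isCompact_Icc)
    ((hR_cont.mul hu_cont).integrableOn_compact isCompact_Icc)

end IsTraceRepresenter

theorem IsQ.exists_isTraceRepresenter {p ν : ℕ} {q : ℝ → ℝ} (hq : IsQ p ν q) :
    ∃ Q : ℝ[X], q = (fun x => Q.eval x) ∧ IsTraceRepresenter p ν Q ∧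
      Q.eval 1 = 1 ∧ Q.eval (-1) = 0 := by
  obtain ⟨⟨c, hc⟩, hq1, hqm1, hq_deriv⟩ := hq
  set Q := ∑ m ∈ Finset.Icc (p - ν) (p + ν + 1), C (c m) * leg m
  obtain rfl : q = fun x => Q.eval x := funext fun x => by simp [Q, hc, eval_finsetSum]
  refine ⟨Q, rfl, ⟨?_, fun i h1 h2 => ?_, fun i h1 h2 => ?_, fun w hw => ?_⟩, hq1, hqm1⟩
  · refine natDegree_sum_le_of_forall_le _ _ fun m hm => ?_
    exact (natDegree_C_mul_le _ _).trans ((leg_natDegree_le m).trans (Finset.mem_Icc.1 hm).2)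
  · simpa [iteratedDeriv_eval] using (hq_deriv i h1 h2).1
  · simpa [iteratedDeriv_eval] using (hq_deriv i h1 h2).2
  · simp only [Q, eval_finsetSum, eval_mul, eval_C, Finset.sum_mul, mul_assoc]
    rw [intervalIntegral.integral_finsetSum fun m _ =>
      (intervalIntegrable_eval_mul w.continuous.continuousOn).const_mul (c m)]
    refine Finset.sum_eq_zero fun m hm => ?_
    rw [intervalIntegral.integral_const_mul, integral_leg_mul_eq_zero
      (hw.trans_le (by exact_mod_cast (Finset.mem_Icc.1 hm).1)), mul_zero]

theorem trace_deriv_projection_error_le_general (p ν : ℕ) (u P q : ℝ → ℝ)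
    (hu : MemH (ν + 1) u) (hP : IsL2Proj p u P) (hq : IsQ p ν q) :
    ∀ x ∈ ({1, -1} : Set ℝ),
      |iteratedDerivWithin ν (fun y => u y - P y) Iom x| ≤
        Real.sqrt (nsq q) * Real.sqrt (semSq (ν + 1) u) := by
  obtain ⟨Q, rfl, hQ, hQ1, hQm1⟩ := hq.exists_isTraceRepresenter
  rintro x (rfl | rfl)
  · simpa [hQ1, hQm1] using hQ.abs_eval_mul_sub_eval_mul_le hu hP
  · simpa [eval_comp, hQ1, hQm1, nsq_comp_neg fun x => Q.eval x] using
      hQ.comp_neg_X.abs_eval_mul_sub_eval_mul_le hu hP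

/-- For `ν ≤ p` and `u ∈ H^{ν+1}(Ω)`, with `q_{p,ν} ∈ Λ_{p−ν}^{p+ν+1}`
satisfying the endpoint conditions, both traces of the `ν`-th derivative of the `L²`
projection error satisfy `|(u − π_p u)^{(ν)}(±1)| ≤ ‖q_{p,ν}‖₀ · |u|_{ν+1}`. -/
theorem trace_deriv_projection_error_le (p ν : ℕ) (hνp : ν ≤ p) (u P q : ℝ → ℝ)
    (hu : MemH (ν + 1) u) (hP : IsL2Proj p u P) (hq : IsQ p ν q) :
    ∀ x ∈ ({1, -1} : Set ℝ),
      |iteratedDerivWithin ν (fun y => u y - P y) Iom x| ≤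
        Real.sqrt (nsq q) * Real.sqrt (semSq (ν + 1) u) :=
  trace_deriv_projection_error_le_general p ν u P q hu hP hq
end
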